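/- arXiv:1506.04856 — 2 statements merged into one kernel-verified Lean document; each statement's English description precedes it below -/
import Mathlib

section
/- Let d ≥ 1, p > 0 and −∞ < β < α < 2. Then Ψ_{α,p} = 𝔗_{β→α,p} ∘ Ψ_{β,p}: the domains coincide, i.e. 𝔇(Ψ_{α,p}) = {M ∈ 𝔇(Ψ_{β,p}) : Ψ_{β,p}M ∈ 𝔇(𝔗_{β→α,p})}, and for every M in this common domain one has 𝔗_{β→α,p}(Ψ_{β,p} M) = Ψ_{α,p} M as measures on ℝ^d. -/
open MeasureTheory Set

noncomputable section

variable {E : Type*} [NormedAddCommGroup E] [NormedSpace ℝ E]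
  [MeasurableSpace E] [BorelSpace E]

/-- The upsilon transform with dilation measure `ρ` on `(0,∞) ⊆ ℝ`:
`[Υ_ρ M](B) = ∫ M(s⁻¹ B) ρ(ds)`, realized as the image of `ρ ⊗ M` under `(s, x) ↦ s • x`. -/
def Upsilon (ρ : Measure ℝ) (M : Measure E) : Measure E :=
  Measure.map (fun sx : ℝ × E => sx.1 • sx.2) (ρ.prod M)

/-- `M` is a Lévy measure: σ-finite, no mass at `0`, and `∫ (|x|² ∧ 1) M(dx) < ∞`. -/
def IsLevyMeasure (M : Measure E) : Prop :=
  SigmaFinite M ∧ M {0} = 0 ∧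
    ∫⁻ x, ENNReal.ofReal (min (‖x‖ ^ 2) 1) ∂M < ⊤

/-- The domain `𝔇(Υ_ρ)`: Lévy measures `M` such that `Υ_ρ M` is again a Lévy measure. -/
def UpsilonDomain (ρ : Measure ℝ) : Set (Measure E) :=
  {M | IsLevyMeasure M ∧ IsLevyMeasure (Upsilon ρ M)}

/-- The range `ℜ(Υ_ρ) = {Υ_ρ M : M ∈ 𝔇(Υ_ρ)}`. -/
def UpsilonRange (ρ : Measure ℝ) : Set (Measure E) :=
  Upsilon ρ '' UpsilonDomain (E := E) ρ

/-- The class `𝔐^α`: Borel measures with `M({0}) = 0` and `∫ (|x|² ∧ |x|^α) M(dx) < ∞`. -/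
def MemMAlpha (α : ℝ) (M : Measure E) : Prop :=
  M {0} = 0 ∧ ∫⁻ x, ENNReal.ofReal (min (‖x‖ ^ 2) (‖x‖ ^ α)) ∂M < ⊤

/-- The class `𝔐^log`: Lévy measures with `∫_{|x|>1} log|x| M(dx) < ∞`. -/
def MemMLog (M : Measure E) : Prop :=
  IsLevyMeasure M ∧
    ∫⁻ x in {x : E | 1 < ‖x‖}, ENNReal.ofReal (Real.log ‖x‖) ∂M < ⊤

/-- The dilation measure `ψ_{α,p}(ds) = s^{-α-1} e^{-s^p} 1_{s>0} ds`. -/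
def psiMeasure (α p : ℝ) : Measure ℝ :=
  (volume : Measure ℝ).withDensity fun s =>
    if 0 < s then ENNReal.ofReal (s ^ (-α - 1) * Real.exp (-(s ^ p))) else 0

/-- `K_{α,β,p} = ∫₀^∞ u^{α-β-1} e^{-u^p} du`. -/
def Kconst (α β p : ℝ) : ℝ :=
  ∫ u in Ioi (0 : ℝ), u ^ (α - β - 1) * Real.exp (-(u ^ p))

/-- The dilation measure
`τ_{β→α,p}(ds) = K_{α,β,p}⁻¹ s^{-α-1} (1-s^p)^{(α-β)/p - 1} 1_{0<s<1} ds`. -/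
def tauMeasure (β α p : ℝ) : Measure ℝ :=
  (volume : Measure ℝ).withDensity fun s =>
    if 0 < s ∧ s < 1 then
      ENNReal.ofReal ((Kconst α β p)⁻¹ * (s ^ (-α - 1) * (1 - s ^ p) ^ ((α - β) / p - 1)))
    else 0

/-- `f` is the density of the fully right-skewed `r`-stable distribution on `(0,∞)`:
a nonnegative measurable function with `∫₀^∞ e^{-t x} f(x) dx = e^{-t^r}` for all `t ≥ 0`. -/
def IsStableDensity (r : ℝ) (f : ℝ → ℝ) : Prop :=
  Measurable f ∧ (∀ x, 0 ≤ f x) ∧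
    ∀ t : ℝ, 0 ≤ t →
      ∫ x in Ioi (0 : ℝ), Real.exp (-(t * x)) * f x = Real.exp (-(t ^ r))

/-- The dilation measure `π_{α,p→q}(ds) = p f_{q/p}(s^{-p}) s^{-α-p-1} 1_{s>0} ds`,
where `f` is (to be assumed) the density of the fully right-skewed `q/p`-stable law. -/
def piMeasure (f : ℝ → ℝ) (α p : ℝ) : Measure ℝ :=
  (volume : Measure ℝ).withDensity fun s =>
    if 0 < s then ENNReal.ofReal (p * f (s ^ (-p)) * s ^ (-α - p - 1)) else 0

/-- The measure `ρ(ds) = g(s) 1_{s>0} ds`. -/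
def densMeasure (g : ℝ → ℝ) : Measure ℝ :=
  (volume : Measure ℝ).withDensity fun s => if 0 < s then ENNReal.ofReal (g s) else 0

/-! Since `(s, t) ↦ s * t` intertwines the dilations, `Υ_{ρ₂} ∘ Υ_{ρ₁} = Υ_{ρ₂ ∗ₘ ρ₁}`, where `∗ₘ`
is the multiplicative convolution of measures. The substitution `s = (1 + y) ^ (-1/p)` turns the
density of `τ_{β→α,p} ∗ₘ ψ_{β,p}` at `u` into the Gamma integral `∫₀^∞ y^{(α-β)/p-1} e^{-u^p y} dy`,
and the normalisation `K_{α,β,p}` makes it exactly the density of `ψ_{α,p}`. This gives the identity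
of measures, hence `𝔗_{β→α,p} Ψ_{β,p} M` is Lévy iff `Ψ_{α,p} M` is. It remains that `Ψ_{β,p} M` is
then Lévy: from `min(s²|x|², 1) ≥ min(s², 1) min(|x|², 1)`, the Lévy integral of `Υ_ρ N` dominates
`∫ min(s², 1) ρ(ds)` times that of `N`, and this constant is positive for `ρ = τ_{β→α,p}`. -/

open scoped ENNReal
open Real

lemma measurable_fst_smul_snd : Measurable fun sx : ℝ × E => sx.1 • sx.2 :=
  (continuous_fst.smul continuous_snd).measurable

instance (ρ : Measure ℝ) (M : Measure E) [SFinite ρ] [SFinite M] : SFinite (Upsilon ρ M) := by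
  unfold Upsilon; infer_instance

lemma lintegral_Upsilon (ρ : Measure ℝ) (M : Measure E) [SFinite ρ] [SFinite M]
    {φ : E → ℝ≥0∞} (hφ : Measurable φ) :
    ∫⁻ x, φ x ∂(Upsilon ρ M) = ∫⁻ x, ∫⁻ s, φ (s • x) ∂ρ ∂M := by
  rw [Upsilon, lintegral_map hφ measurable_fst_smul_snd]
  exact lintegral_prod_symm _ (hφ.comp measurable_fst_smul_snd).aemeasurable

lemma Upsilon_Upsilon (ρ₁ ρ₂ : Measure ℝ) (M : Measure E) [SFinite ρ₁] [SFinite ρ₂] [SFinite M] :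
    Upsilon ρ₂ (Upsilon ρ₁ M) = Upsilon (ρ₂ ∗ₘ ρ₁) M := by
  ext B hB
  have hφ : Measurable (B.indicator 1 : E → ℝ≥0∞) := measurable_one.indicator hB
  have hφ' : Measurable fun sx : ℝ × E => B.indicator (1 : E → ℝ≥0∞) (sx.1 • sx.2) :=
    hφ.comp measurable_fst_smul_snd
  rw [← lintegral_indicator_one hB, ← lintegral_indicator_one hB, lintegral_Upsilon _ _ hφ,
    lintegral_Upsilon _ _ hφ, lintegral_Upsilon _ _ (hφ'.lintegral_prod_left)]
  refine lintegral_congr fun x => ?_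
  rw [Measure.lintegral_mconv (f := fun s : ℝ => B.indicator 1 (s • x))
    (hφ.comp (measurable_id.smul_const x)), lintegral_lintegral_swap]
  · simp only [smul_smul]
  · exact (hφ.comp (measurable_snd.smul (measurable_fst.smul_const x))).aemeasurable

lemma Upsilon_singleton_zero {ρ : Measure ℝ} {M : Measure E} [SFinite ρ] [SFinite M]
    (hρ : ρ {0} = 0) (hM : M {0} = 0) : Upsilon ρ M {0} = 0 := by
  rw [Upsilon, Measure.map_apply measurable_fst_smul_snd (measurableSet_singleton 0)]
  have hsub : (fun sx : ℝ × E => sx.1 • sx.2) ⁻¹' {0} ⊆ {0} ×ˢ univ ∪ univ ×ˢ {0} := by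
    rintro ⟨s, x⟩ h
    simpa using h
  refine measure_mono_null hsub (measure_union_null ?_ ?_) <;> simp [Measure.prod_prod, hρ, hM]

omit [NormedSpace ℝ E] in
lemma isLevyMeasure_iff {μ : Measure E} :
    IsLevyMeasure μ ↔ μ {0} = 0 ∧ ∫⁻ x, ENNReal.ofReal (min (‖x‖ ^ 2) 1) ∂μ < ⊤ := by
  refine ⟨fun h => h.2, fun ⟨h0, hfin⟩ => ⟨?_, h0, hfin⟩⟩
  set w : E → ℝ≥0∞ := fun x => ENNReal.ofReal (min (‖x‖ ^ 2) 1)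
  have hw : Measurable w := by fun_prop
  have hw0 : ∀ x, w x ≠ 0 ↔ x ≠ 0 := fun x => by simp [w]
  have : IsFiniteMeasure (μ.withDensity w) := isFiniteMeasure_withDensity hfin.ne
  -- `μ` is the finite measure `w μ` reweighted by `w⁻¹`, which is finite off the null set `{0}`.
  rw [← withDensity_inv_same hw
    ((measure_eq_zero_iff_ae_notMem.1 h0).mono fun x hx => (hw0 x).2 hx)
    (ae_of_all _ fun _ => ENNReal.ofReal_ne_top)]
  exact SigmaFinite.withDensity_of_ne_top
    ((ae_withDensity_iff hw).2 (ae_of_all _ fun _ hx => ENNReal.inv_ne_top.2 hx))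

lemma min_sq_mul_min_sq_le (a b : ℝ) : min (a ^ 2) 1 * min (b ^ 2) 1 ≤ min ((a * b) ^ 2) 1 := by
  rw [mul_pow]
  exact le_min (mul_le_mul (min_le_left _ _) (min_le_left _ _) (by positivity) (by positivity))
    (mul_le_one₀ (min_le_right _ _) (by positivity) (min_le_right _ _))

lemma lintegral_min_sq_mul_le_lintegral_Upsilon (ρ : Measure ℝ) (N : Measure E) [SFinite ρ]
    [SFinite N] :
    (∫⁻ s, ENNReal.ofReal (min (s ^ 2) 1) ∂ρ) * ∫⁻ x, ENNReal.ofReal (min (‖x‖ ^ 2) 1) ∂N ≤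
      ∫⁻ x, ENNReal.ofReal (min (‖x‖ ^ 2) 1) ∂(Upsilon ρ N) := by
  rw [lintegral_Upsilon _ _ (by fun_prop), ← lintegral_const_mul _ (by fun_prop)]
  refine lintegral_mono fun x => ?_
  rw [← lintegral_mul_const _ (by fun_prop)]
  refine lintegral_mono fun s => ?_
  rw [← ENNReal.ofReal_mul (by positivity), norm_smul, Real.norm_eq_abs, ← sq_abs s]
  exact ENNReal.ofReal_le_ofReal (min_sq_mul_min_sq_le |s| ‖x‖)

lemma IsLevyMeasure.of_Upsilon {ρ : Measure ℝ} {N : Measure E} [SFinite ρ] [SFinite N]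
    (hρ : ρ {0}ᶜ ≠ 0) (hN : N {0} = 0) (h : IsLevyMeasure (Upsilon ρ N)) : IsLevyMeasure N := by
  have hc : ∫⁻ s, ENNReal.ofReal (min (s ^ 2) 1) ∂ρ ≠ 0 := by
    rw [Ne, lintegral_eq_zero_iff (by fun_prop), Filter.EventuallyEq, ae_iff]
    convert hρ using 3
    ext s
    simp
  refine isLevyMeasure_iff.2 ⟨hN, ?_⟩
  have := (lintegral_min_sq_mul_le_lintegral_Upsilon ρ N).trans_lt h.2.2
  rcases ENNReal.mul_lt_top_iff.1 this with h' | h' | h'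
  · exact h'.2
  · exact absurd h' hc
  · rw [h']; exact ENNReal.zero_lt_top

lemma lintegral_comp_mul_left {f : ℝ → ℝ≥0∞} (hf : Measurable f) {s : ℝ} (hs : s ≠ 0) :
    ∫⁻ t, f (s * t) = ENNReal.ofReal |s⁻¹| * ∫⁻ u, f u := by
  rw [← lintegral_map hf (measurable_const_mul s), Real.map_volume_mul_left hs,
    lintegral_smul_measure, smul_eq_mul]

lemma withDensity_mconv_withDensity {g h : ℝ → ℝ≥0∞} (hg : Measurable g) (hh : Measurable h) :
    volume.withDensity g ∗ₘ volume.withDensity h =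
      volume.withDensity fun u => ∫⁻ s, g s * ENNReal.ofReal |s⁻¹| * h (u / s) := by
  have hF : Measurable fun su : ℝ × ℝ => g su.1 * ENNReal.ofReal |su.1⁻¹| * h (su.2 / su.1) := by
    fun_prop
  ext A hA
  have hA1 : Measurable (A.indicator 1 : ℝ → ℝ≥0∞) := measurable_one.indicator hA
  calc (volume.withDensity g ∗ₘ volume.withDensity h) A
      = ∫⁻ s, g s * ∫⁻ t, h t * A.indicator 1 (s * t) := by
        rw [← lintegral_indicator_one hA, Measure.lintegral_mconv hA1,
          lintegral_withDensity_eq_lintegral_mul _ hg (by fun_prop)]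
        refine lintegral_congr fun s => ?_
        rw [Pi.mul_apply, lintegral_withDensity_eq_lintegral_mul _ hh (by fun_prop)]
        rfl
    _ = ∫⁻ s, ∫⁻ u, A.indicator 1 u * (g s * ENNReal.ofReal |s⁻¹| * h (u / s)) := by
        refine lintegral_congr_ae ((measure_eq_zero_iff_ae_notMem.1 (measure_singleton 0)).mono
          fun s (hs : s ≠ 0) => ?_)
        have := lintegral_comp_mul_left (f := fun u => h (u / s) * A.indicator 1 u)
          (by fun_prop) hs
        simp only [mul_div_cancel_left₀ _ hs] at this
        dsimp only
        rw [this, ← lintegral_const_mul _ (by fun_prop), ← lintegral_const_mul _ (by fun_prop)]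
        congr 1; ext u; ring
    _ = ∫⁻ u, A.indicator 1 u * ∫⁻ s, g s * ENNReal.ofReal |s⁻¹| * h (u / s) := by
        rw [lintegral_lintegral_swap (by fun_prop)]
        exact lintegral_congr fun u =>
          lintegral_const_mul _ (hF.comp (measurable_id.prodMk measurable_const))
    _ = _ := by
        rw [← lintegral_indicator_one hA,
          lintegral_withDensity_eq_lintegral_mul _ hF.lintegral_prod_left' hA1]
        simp only [Pi.mul_apply, mul_comm]

def psiDensity (α p s : ℝ) : ℝ≥0∞ :=
  if 0 < s then ENNReal.ofReal (s ^ (-α - 1) * exp (-(s ^ p))) else 0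

def tauDensity (β α p s : ℝ) : ℝ≥0∞ :=
  if 0 < s ∧ s < 1 then
    ENNReal.ofReal ((Kconst α β p)⁻¹ * (s ^ (-α - 1) * (1 - s ^ p) ^ ((α - β) / p - 1)))
  else 0

lemma psiMeasure_eq_withDensity (α p : ℝ) :
    psiMeasure α p = volume.withDensity (psiDensity α p) := rfl

lemma tauMeasure_eq_withDensity (β α p : ℝ) :
    tauMeasure β α p = volume.withDensity (tauDensity β α p) := rfl

lemma measurable_psiDensity (α p : ℝ) : Measurable (psiDensity α p) :=
  Measurable.ite measurableSet_Ioi (by fun_prop) measurable_const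

lemma measurable_tauDensity (β α p : ℝ) : Measurable (tauDensity β α p) :=
  Measurable.ite measurableSet_Ioo (by fun_prop) measurable_const

lemma Kconst_eq {α β p : ℝ} (hβα : β < α) (hp : 0 < p) :
    Kconst α β p = p⁻¹ * Gamma ((α - β) / p) := by
  rw [Kconst, integral_rpow_mul_exp_neg_rpow hp (by linarith), one_div, sub_add_cancel]

lemma Kconst_pos {α β p : ℝ} (hβα : β < α) (hp : 0 < p) : 0 < Kconst α β p := by
  rw [Kconst_eq hβα hp]
  have := Gamma_pos_of_pos (div_pos (sub_pos.2 hβα) hp)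
  positivity

lemma one_add_rpow_neg_inv_mem_Ioo {p y : ℝ} (hp : 0 < p) (hy : 0 < y) :
    (1 + y) ^ (-p⁻¹) ∈ Ioo 0 1 :=
  ⟨rpow_pos_of_pos (by linarith) _, rpow_lt_one_of_one_lt_of_neg (by linarith) (by simpa using hp)⟩

lemma lintegral_Ioo_zero_one_eq_lintegral_Ioi {p : ℝ} (hp : 0 < p) (g : ℝ → ℝ≥0∞) :
    ∫⁻ s in Ioo 0 1, g s =
      ∫⁻ y in Ioi 0, ENNReal.ofReal (p⁻¹ * (1 + y) ^ (-p⁻¹ - 1)) * g ((1 + y) ^ (-p⁻¹)) := by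
  have hneg : -p⁻¹ < 0 := by simpa using hp
  have himage : (fun y : ℝ => (1 + y) ^ (-p⁻¹)) '' Ioi 0 = Ioo 0 1 := by
    ext s
    constructor
    · rintro ⟨y, hy, rfl⟩
      exact one_add_rpow_neg_inv_mem_Ioo hp hy
    · rintro ⟨hs0, hs1⟩
      refine ⟨s ^ (-p) - 1, ?_, show (1 + (s ^ (-p) - 1)) ^ (-p⁻¹) = s from ?_⟩
      · simpa using one_lt_rpow_of_pos_of_lt_one_of_neg hs0 hs1 (neg_lt_zero.2 hp)
      · rw [add_sub_cancel, ← rpow_mul hs0.le, neg_mul_neg, mul_inv_cancel₀ hp.ne', rpow_one]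
  have hderiv : ∀ y ∈ Ioi (0 : ℝ), HasDerivWithinAt (fun y : ℝ => (1 + y) ^ (-p⁻¹))
      (-p⁻¹ * (1 + y) ^ (-p⁻¹ - 1)) (Ioi 0) y := fun y hy => by
    have hy0 : (1 : ℝ) + id y ≠ 0 := by simp only [id]; linarith [mem_Ioi.1 hy]
    simpa only [id, one_mul] using
      (((hasDerivAt_id y).const_add 1).rpow_const (Or.inl hy0)).hasDerivWithinAt
  have hinj : InjOn (fun y : ℝ => (1 + y) ^ (-p⁻¹)) (Ioi 0) :=
    StrictAntiOn.injOn fun a ha b _ hab =>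
      rpow_lt_rpow_of_neg (by linarith [mem_Ioi.1 ha]) (by linarith) hneg
  rw [← himage, lintegral_image_eq_lintegral_abs_deriv_mul measurableSet_Ioi hderiv hinj]
  refine setLIntegral_congr_fun measurableSet_Ioi fun y hy => ?_
  rw [neg_mul, abs_neg, abs_of_pos (by have := mem_Ioi.1 hy; positivity)]

lemma lintegral_rpow_mul_exp_neg_mul_Ioi {a r : ℝ} (ha : 0 < a) (hr : 0 < r) :
    ∫⁻ y in Ioi 0, ENNReal.ofReal (y ^ (a - 1) * exp (-(r * y))) =
      ENNReal.ofReal ((1 / r) ^ a * Gamma a) := by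
  have hval := integral_rpow_mul_exp_neg_mul_Ioi ha hr
  -- integrable since its Bochner integral is nonzero
  have hint := Integrable.of_integral_ne_zero (hval ▸ (by positivity : (1 / r) ^ a * Gamma a ≠ 0))
  rw [← hval, ofReal_integral_eq_lintegral_ofReal hint
    ((ae_restrict_iff' measurableSet_Ioi).2 (ae_of_all _ fun y (hy : 0 < y) => by positivity))]

lemma jacobian_mul_tau_mul_psi {α β p u y s K : ℝ} (hp : 0 < p) (hu : 0 < u) (hy : 0 < y)
    (hs : s = (1 + y) ^ (-p⁻¹)) :
    p⁻¹ * (1 + y) ^ (-p⁻¹ - 1) *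
        (K⁻¹ * (s ^ (-α - 1) * (1 - s ^ p) ^ ((α - β) / p - 1)) * |s⁻¹| *
          ((u / s) ^ (-β - 1) * exp (-((u / s) ^ p)))) =
      (p * K)⁻¹ * (u ^ (-β - 1) * exp (-(u ^ p))) *
        (y ^ ((α - β) / p - 1) * exp (-(u ^ p * y))) := by
  set t := 1 + y with ht_def
  have ht : 0 < t := by linarith
  have hs0 : 0 < s := hs ▸ rpow_pos_of_pos ht _
  have hsp : s ^ p = t⁻¹ := by
    rw [hs, ← rpow_mul ht.le, neg_mul, inv_mul_cancel₀ hp.ne', rpow_neg_one]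
  have hsinv : s⁻¹ = t ^ p⁻¹ := by rw [hs, rpow_neg ht.le, inv_inv]
  have hu_s : u / s = u * t ^ p⁻¹ := by rw [div_eq_mul_inv, hsinv]
  have h1 : s ^ (-α - 1) = t ^ ((α + 1) / p) := by
    rw [hs, ← rpow_mul ht.le]; congr 1; field_simp; ring
  have h2 : (1 - s ^ p) ^ ((α - β) / p - 1) =
      y ^ ((α - β) / p - 1) * t ^ (-((α - β) / p - 1)) := by
    rw [hsp, show 1 - t⁻¹ = y / t by field_simp; ring, div_rpow hy.le ht.le, rpow_neg ht.le,
      div_eq_mul_inv]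
  have h3 : (u / s) ^ (-β - 1) = u ^ (-β - 1) * t ^ (p⁻¹ * (-β - 1)) := by
    rw [hu_s, mul_rpow hu.le (rpow_nonneg ht.le _), ← rpow_mul ht.le]
  have h4 : exp (-((u / s) ^ p)) = exp (-(u ^ p)) * exp (-(u ^ p * y)) := by
    rw [hu_s, mul_rpow hu.le (rpow_nonneg ht.le _), ← rpow_mul ht.le,
      inv_mul_cancel₀ hp.ne', rpow_one, ← exp_add, ht_def]
    ring_nf
  have hcancel : t ^ (-p⁻¹ - 1) * t ^ ((α + 1) / p) * t ^ (-((α - β) / p - 1)) * t ^ p⁻¹ *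
      t ^ (p⁻¹ * (-β - 1)) = 1 := by
    simp only [← rpow_add ht]
    rw [← rpow_zero t]
    congr 1
    field_simp
    ring
  rw [h1, h2, h3, h4, abs_of_pos (inv_pos.2 hs0), hsinv, mul_inv]
  linear_combination (p⁻¹ * K⁻¹ * u ^ (-β - 1) * exp (-(u ^ p)) * exp (-(u ^ p * y)) *
    y ^ ((α - β) / p - 1)) * hcancel

lemma tauDensity_mul_psiDensity_of_mem {β α p s u : ℝ} (hβα : β < α) (hp : 0 < p)
    (hs : s ∈ Ioo 0 1) (hu : 0 < u) :
    tauDensity β α p s * ENNReal.ofReal |s⁻¹| * psiDensity β p (u / s) =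
      ENNReal.ofReal ((Kconst α β p)⁻¹ * (s ^ (-α - 1) * (1 - s ^ p) ^ ((α - β) / p - 1)) *
        |s⁻¹| * ((u / s) ^ (-β - 1) * exp (-((u / s) ^ p)))) := by
  have hK := Kconst_pos hβα hp
  have hsp : 0 ≤ 1 - s ^ p := sub_nonneg.2 (rpow_le_one hs.1.le hs.2.le hp.le)
  have hs0 := hs.1
  rw [tauDensity, if_pos (show 0 < s ∧ s < 1 from hs), psiDensity, if_pos (div_pos hu hs0),
    ← ENNReal.ofReal_mul (by positivity), ← ENNReal.ofReal_mul (by positivity)]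

lemma lintegral_tauDensity_mul_psiDensity {β α p : ℝ} (hβα : β < α) (hp : 0 < p) (u : ℝ) :
    ∫⁻ s, tauDensity β α p s * ENNReal.ofReal |s⁻¹| * psiDensity β p (u / s) =
      psiDensity α p u := by
  rcases le_or_gt u 0 with hu | hu
  · rw [psiDensity, if_neg hu.not_gt, ← lintegral_zero]
    refine lintegral_congr fun s => ?_
    rcases le_or_gt s 0 with hs | hs
    · simp [tauDensity, hs.not_gt]
    · rw [psiDensity, if_neg (div_nonpos_of_nonpos_of_nonneg hu hs.le).not_gt, mul_zero]
  have hc : 0 < (α - β) / p := div_pos (sub_pos.2 hβα) hp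
  have hC : 0 ≤ (p * Kconst α β p)⁻¹ * (u ^ (-β - 1) * exp (-(u ^ p))) := by
    have := Kconst_pos hβα hp
    positivity
  calc ∫⁻ s, tauDensity β α p s * ENNReal.ofReal |s⁻¹| * psiDensity β p (u / s)
      = ∫⁻ s in Ioo 0 1, tauDensity β α p s * ENNReal.ofReal |s⁻¹| * psiDensity β p (u / s) := by
        refine (setLIntegral_eq_of_support_subset
          (Function.support_subset_iff'.2 fun s hs => ?_)).symm
        rw [tauDensity, if_neg (show ¬(0 < s ∧ s < 1) from hs), zero_mul, zero_mul]
    _ = ∫⁻ y in Ioi 0, ENNReal.ofReal ((p * Kconst α β p)⁻¹ * (u ^ (-β - 1) * exp (-(u ^ p)))) *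
          ENNReal.ofReal (y ^ ((α - β) / p - 1) * exp (-(u ^ p * y))) := by
        rw [lintegral_Ioo_zero_one_eq_lintegral_Ioi hp]
        refine setLIntegral_congr_fun measurableSet_Ioi fun y (hy : 0 < y) => ?_
        rw [tauDensity_mul_psiDensity_of_mem hβα hp (one_add_rpow_neg_inv_mem_Ioo hp hy) hu,
          ← ENNReal.ofReal_mul (by positivity),
          jacobian_mul_tau_mul_psi hp hu hy rfl, ENNReal.ofReal_mul hC]
    _ = ENNReal.ofReal ((p * Kconst α β p)⁻¹ * (u ^ (-β - 1) * exp (-(u ^ p))) *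
          ((1 / u ^ p) ^ ((α - β) / p) * Gamma ((α - β) / p))) := by
        rw [lintegral_const_mul _ (by fun_prop),
          lintegral_rpow_mul_exp_neg_mul_Ioi hc (by positivity),
          ENNReal.ofReal_mul hC]
    _ = psiDensity α p u := by
        have e1 : (1 / u ^ p) ^ ((α - β) / p) = u ^ (β - α) := by
          rw [one_div, inv_rpow (by positivity), ← rpow_mul hu.le, ← rpow_neg hu.le]
          congr 1; field_simp; ring
        have e2 : u ^ (-α - 1) = u ^ (-β - 1) * u ^ (β - α) := by
          rw [← rpow_add hu]; ring_nf
        rw [psiDensity, if_pos hu, Kconst_eq hβα hp, e1, e2]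
        congr 1
        field_simp

instance (α p : ℝ) : SFinite (psiMeasure α p) := by unfold psiMeasure; infer_instance

instance (β α p : ℝ) : SFinite (tauMeasure β α p) := by unfold tauMeasure; infer_instance

lemma psiMeasure_singleton_zero (α p : ℝ) : psiMeasure α p {0} = 0 :=
  withDensity_absolutelyContinuous _ _ (measure_singleton 0)

lemma tauMeasure_compl_singleton_zero_ne_zero {β α p : ℝ} (hβα : β < α) (hp : 0 < p) :
    tauMeasure β α p {0}ᶜ ≠ 0 := by
  refine (measure_mono_null fun s (hs : s ∈ Ioo 0 1) => hs.1.ne').mt ?_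
  have hK := Kconst_pos hβα hp
  have hpos : {s | tauDensity β α p s ≠ 0} ∩ Ioo 0 1 = Ioo 0 1 := by
    refine inter_eq_right.2 fun s hs => ?_
    have hsp : 0 < 1 - s ^ p := sub_pos.2 (rpow_lt_one hs.1.le hs.2 hp)
    have hs0 := hs.1
    show tauDensity β α p s ≠ 0
    simp only [tauDensity, if_pos (show 0 < s ∧ s < 1 from hs), ne_eq, ENNReal.ofReal_eq_zero,
      not_le]
    positivity
  rw [tauMeasure_eq_withDensity,
    withDensity_apply_eq_zero' (measurable_tauDensity β α p).aemeasurable, hpos]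
  simp

lemma tauMeasure_mconv_psiMeasure {β α p : ℝ} (hβα : β < α) (hp : 0 < p) :
    tauMeasure β α p ∗ₘ psiMeasure β p = psiMeasure α p := by
  rw [tauMeasure_eq_withDensity, psiMeasure_eq_withDensity, psiMeasure_eq_withDensity α,
    withDensity_mconv_withDensity (measurable_tauDensity β α p) (measurable_psiDensity β p)]
  congr 1
  funext u
  exact lintegral_tauDensity_mul_psiDensity hβα hp u

lemma Upsilon_tauMeasure_Upsilon_psiMeasure {β α p : ℝ} (hβα : β < α) (hp : 0 < p)
    (M : Measure E) [SFinite M] :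
    Upsilon (tauMeasure β α p) (Upsilon (psiMeasure β p) M) = Upsilon (psiMeasure α p) M := by
  rw [Upsilon_Upsilon, tauMeasure_mconv_psiMeasure hβα hp]

theorem stmt8_general (d : ℕ) (β α p : ℝ) (hβα : β < α) (hp : 0 < p) :
    UpsilonDomain (E := EuclideanSpace ℝ (Fin d)) (psiMeasure α p) =
      {M ∈ UpsilonDomain (psiMeasure β p) |
        Upsilon (psiMeasure β p) M ∈ UpsilonDomain (tauMeasure β α p)} ∧
    ∀ M ∈ UpsilonDomain (E := EuclideanSpace ℝ (Fin d)) (psiMeasure α p),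
      Upsilon (tauMeasure β α p) (Upsilon (psiMeasure β p) M) =
        Upsilon (psiMeasure α p) M := by
  have hcomp (M : Measure (EuclideanSpace ℝ (Fin d))) (hM : IsLevyMeasure M) :
      Upsilon (tauMeasure β α p) (Upsilon (psiMeasure β p) M) = Upsilon (psiMeasure α p) M :=
    have := hM.1
    Upsilon_tauMeasure_Upsilon_psiMeasure hβα hp M
  refine ⟨Set.ext fun M => ⟨fun ⟨hM, hMα⟩ => ?_, fun ⟨⟨hM, _⟩, _, hMτ⟩ => ⟨hM, hcomp M hM ▸ hMτ⟩⟩,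
    fun M hM => hcomp M hM.1⟩
  have := hM.1
  have hMβ : IsLevyMeasure (Upsilon (psiMeasure β p) M) :=
    .of_Upsilon (tauMeasure_compl_singleton_zero_ne_zero hβα hp)
      (Upsilon_singleton_zero (psiMeasure_singleton_zero β p) hM.2.1) (hcomp M hM ▸ hMα)
  exact ⟨⟨hM, hMβ⟩, hMβ, hcomp M hM ▸ hMα⟩

theorem stmt8 (d : ℕ) (hd : 1 ≤ d) (β α p : ℝ) (hβα : β < α) (hα : α < 2) (hp : 0 < p) :
    UpsilonDomain (E := EuclideanSpace ℝ (Fin d)) (psiMeasure α p) =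
      {M ∈ UpsilonDomain (psiMeasure β p) |
        Upsilon (psiMeasure β p) M ∈ UpsilonDomain (tauMeasure β α p)} ∧
    ∀ M ∈ UpsilonDomain (E := EuclideanSpace ℝ (Fin d)) (psiMeasure α p),
      Upsilon (tauMeasure β α p) (Upsilon (psiMeasure β p) M) =
        Upsilon (psiMeasure α p) M :=
  stmt8_general d β α p hβα hp
end
end

section
/- Let d ≥ 1 and let ρ(ds) = g(s) 1_{s>0} ds for a nonnegative measurable g, and suppose there exist δ ∈ (0,1), α ∈ (0,2) and 0 < a < b < ∞ with a < s^{α+1} g(s) < b for all s ∈ (0,δ), and that ∫₀^∞ s² g(s) ds < ∞. Then for every β ∈ [0,α), the range of Υ_ρ is contained in 𝔐^β: for every M ∈ 𝔇(Υ_ρ) one has ∫ (|x|² ∧ |x|^β) [Υ_ρ M](dx) < ∞. -/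
open MeasureTheory Set

noncomputable section

variable {E : Type*} [NormedAddCommGroup E] [NormedSpace ℝ E]
  [MeasurableSpace E] [BorelSpace E]

/-!
Pulling `Υ_ρ M` back to `ρ ⊗ M`, the integral of `φ(|y|)` against `Υ_ρ M` becomes
`∫ h_φ(|x|) M(dx)` with `h_φ(r) = ∫₀^∞ φ(s r) g(s) ds` (`dilatedIntegral g φ r`). Since
`min(t², t^β) ≤ (t² ∧ 1) + t^β 1_{t>1}`, it suffices to dominate the tail `∫_{sr>1} (sr)^β g(s) ds`
by `C h_{t²∧1}(r) + C' (r² ∧ 1)`, both of which are `M`-integrable (the first because `Υ_ρ M` is a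
Lévy measure). For bounded `r` the tail is at most `r² ∫ s² g(s) ds`. For large `r`, the upper
bound `g(s) < b s^{-α-1}` near `0` and `β < α` make the tail `O(r^α)`, while the lower bound
`g(s) > a s^{-α-1}` gives `h_{t²∧1}(r) ≥ ∫_{1/r}^{2/r} g(s) ds ≥ a 2^{-α-1} r^α`.
-/

open scoped ENNReal
open ENNReal (ofReal_le_ofReal ofReal_ne_top ofReal_mul ofReal_add_le)

lemma lintegral_upsilon {ρ : Measure ℝ} {M : Measure E} [SigmaFinite ρ] [SigmaFinite M]
    {F : E → ℝ≥0∞} (hF : Measurable F) :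
    ∫⁻ y, F y ∂Upsilon ρ M = ∫⁻ x, ∫⁻ s, F (s • x) ∂ρ ∂M := by
  have hsmul : Measurable fun sx : ℝ × E => sx.1 • sx.2 := by fun_prop
  rw [Upsilon, lintegral_map hF hsmul]
  exact lintegral_prod_symm _ (hF.comp hsmul).aemeasurable

lemma densMeasure_eq (g : ℝ → ℝ) :
    densMeasure g = (volume.restrict (Ioi 0)).withDensity fun s => ENNReal.ofReal (g s) := by
  rw [← withDensity_indicator measurableSet_Ioi]
  rfl

instance densMeasure.instSigmaFinite (g : ℝ → ℝ) : SigmaFinite (densMeasure g) := by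
  rw [densMeasure_eq]
  infer_instance

lemma lintegral_Ioi_rpow_of_lt {p : ℝ} (hp : p < -1) {c : ℝ} (hc : 0 < c) :
    ∫⁻ s in Ioi c, ENNReal.ofReal (s ^ p) = ENNReal.ofReal (c ^ (p + 1) / -(p + 1)) := by
  rw [← ofReal_integral_eq_lintegral_ofReal (integrableOn_Ioi_rpow_of_lt hp hc)
    ((ae_restrict_iff' measurableSet_Ioi).2 (ae_of_all _ fun s hs =>
      Real.rpow_nonneg (hc.trans hs).le p)), integral_Ioi_rpow_of_lt hp hc, div_neg, neg_div]

lemma lintegral_Ioi_inv_mul_rpow (b : ℝ) {q r : ℝ} (hq : 0 < q) (hr : 0 < r) :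
    ∫⁻ s in Ioi r⁻¹, ENNReal.ofReal (b * s ^ (-q - 1)) = ENNReal.ofReal (b / q * r ^ q) := by
  have hr' : 0 < r⁻¹ := inv_pos.2 hr
  rw [setLIntegral_congr_fun measurableSet_Ioi fun s hs =>
      ENNReal.ofReal_mul' (Real.rpow_nonneg (hr'.trans hs).le _),
    lintegral_const_mul _ (by fun_prop), lintegral_Ioi_rpow_of_lt (by linarith) hr',
    ← ENNReal.ofReal_mul' (div_nonneg (Real.rpow_nonneg hr'.le _) (by linarith))]
  congr 1
  rw [Real.inv_rpow hr.le, ← Real.rpow_neg hr.le]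
  ring_nf

lemma mul_rpow_le_of_rpow_mul_le {g α β b s : ℝ} (hs : 0 < s) (h : s ^ (α + 1) * g ≤ b) :
    g * s ^ β ≤ b * s ^ (-(α - β) - 1) := by
  have hpow : s ^ (α + 1) * s ^ (-(α - β) - 1) = s ^ β := by
    rw [← Real.rpow_add hs]; ring_nf
  calc g * s ^ β = s ^ (α + 1) * g * s ^ (-(α - β) - 1) := by rw [← hpow]; ring
    _ ≤ b * s ^ (-(α - β) - 1) := by gcongr

lemma rpow_le_rpow_sub_two_mul_sq {β δ s : ℝ} (hδ : 0 < δ) (hδs : δ ≤ s) (hβ : β ≤ 2) :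
    s ^ β ≤ δ ^ (β - 2) * s ^ 2 := by
  have hs : 0 < s := hδ.trans_le hδs
  calc s ^ β = s ^ (β - 2) * s ^ 2 := by
        rw [← Real.rpow_natCast, ← Real.rpow_add hs]; norm_num
    _ ≤ δ ^ (β - 2) * s ^ 2 := by
        gcongr ?_ * _
        exact Real.rpow_le_rpow_of_nonpos hδ hδs (by linarith)

lemma min_sq_rpow_le (β : ℝ) {t : ℝ} (ht : 0 ≤ t) :
    min (t ^ 2) (t ^ β) ≤ min (t ^ 2) 1 + (Ioi 1).indicator (· ^ β) t := by
  by_cases ht1 : t ∈ Ioi 1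
  · rw [indicator_of_mem ht1]
    exact (min_le_right _ _).trans (le_add_of_nonneg_left (by positivity))
  · rw [indicator_of_notMem ht1, add_zero, min_eq_left (pow_le_one₀ ht (not_lt.1 ht1))]
    exact min_le_left _ _

lemma indicator_rpow_le_sq {β : ℝ} (hβ : β ≤ 2) (t : ℝ) :
    (Ioi 1).indicator (· ^ β) t ≤ t ^ 2 := by
  by_cases ht1 : t ∈ Ioi 1
  · rw [indicator_of_mem ht1, ← Real.rpow_two]
    exact Real.rpow_le_rpow_of_exponent_le (le_of_lt ht1) hβ
  · rw [indicator_of_notMem ht1]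
    positivity

lemma sq_le_sq_mul_min_sq_one {r R : ℝ} (hr : 0 ≤ r) (hrR : r ≤ R) (hR : 1 ≤ R) :
    r ^ 2 ≤ R ^ 2 * min (r ^ 2) 1 := by
  rcases le_total r 1 with hr1 | hr1
  · rw [min_eq_left (pow_le_one₀ hr hr1)]
    exact le_mul_of_one_le_left (by positivity) (one_le_pow₀ hR)
  · rw [min_eq_right (one_le_pow₀ hr1), mul_one]
    exact pow_le_pow_left₀ hr hrR 2

def dilatedIntegral (g φ : ℝ → ℝ) (r : ℝ) : ℝ≥0∞ :=
  ∫⁻ s in Ioi 0, ENNReal.ofReal (g s) * ENNReal.ofReal (φ (s * r))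

section Dilated

variable {g : ℝ → ℝ}

lemma lintegral_densMeasure_smul (hg : Measurable g) {φ : ℝ → ℝ} (hφ : Measurable φ) (x : E) :
    ∫⁻ s, ENNReal.ofReal (φ ‖s • x‖) ∂densMeasure g = dilatedIntegral g φ ‖x‖ := by
  rw [densMeasure_eq, lintegral_withDensity_eq_lintegral_mul _ hg.ennreal_ofReal (by fun_prop)]
  refine setLIntegral_congr_fun measurableSet_Ioi fun s hs => ?_
  simp [norm_smul, abs_of_pos (mem_Ioi.1 hs)]

lemma dilatedIntegral_mono {φ ψ : ℝ → ℝ} (h : ∀ t, 0 ≤ t → φ t ≤ ψ t) {r : ℝ} (hr : 0 ≤ r) :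
    dilatedIntegral g φ r ≤ dilatedIntegral g ψ r :=
  setLIntegral_mono' measurableSet_Ioi fun _ hs =>
    mul_le_mul_right (ofReal_le_ofReal (h _ (mul_nonneg (le_of_lt hs) hr))) _

lemma dilatedIntegral_le_add (hg : Measurable g) {φ φ₁ φ₂ : ℝ → ℝ} (hφ₁ : Measurable φ₁)
    (h : ∀ t, 0 ≤ t → φ t ≤ φ₁ t + φ₂ t) {r : ℝ} (hr : 0 ≤ r) :
    dilatedIntegral g φ r ≤ dilatedIntegral g φ₁ r + dilatedIntegral g φ₂ r := by
  calc dilatedIntegral g φ r ≤ dilatedIntegral g (φ₁ + φ₂) r := dilatedIntegral_mono h hr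
    _ ≤ ∫⁻ s in Ioi 0, ENNReal.ofReal (g s) * ENNReal.ofReal (φ₁ (s * r)) +
          ENNReal.ofReal (g s) * ENNReal.ofReal (φ₂ (s * r)) :=
        lintegral_mono fun s => by
          rw [← mul_add]; gcongr; exact ofReal_add_le
    _ = _ := lintegral_add_left (by fun_prop) _

lemma dilatedIntegral_sq (r : ℝ) :
    dilatedIntegral g (· ^ 2) r = ENNReal.ofReal (r ^ 2) * dilatedIntegral g (· ^ 2) 1 := by
  rw [dilatedIntegral, dilatedIntegral, ← lintegral_const_mul' _ _ ofReal_ne_top]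
  congr 1 with s
  rw [mul_left_comm, ← ofReal_mul (sq_nonneg r)]
  ring_nf

lemma lintegral_upsilon_densMeasure (hg : Measurable g) {M : Measure E}
    [SigmaFinite M] {φ : ℝ → ℝ} (hφ : Measurable φ) :
    ∫⁻ y, ENNReal.ofReal (φ ‖y‖) ∂Upsilon (densMeasure g) M =
      ∫⁻ x, dilatedIntegral g φ ‖x‖ ∂M := by
  rw [lintegral_upsilon (by fun_prop)]
  exact lintegral_congr fun x => lintegral_densMeasure_smul hg hφ x

lemma rpow_mul_le_dilatedIntegral_min_sq_one {α δ a : ℝ} (hδ : 0 < δ) (hα : 0 ≤ α + 1)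
    (ha : 0 ≤ a) (hlow : ∀ s ∈ Ioo 0 δ, a ≤ s ^ (α + 1) * g s) {r : ℝ} (hr : 2 / δ < r) :
    ENNReal.ofReal (a * 2 ^ (-(α + 1)) * r ^ α) ≤ dilatedIntegral g (fun t => min (t ^ 2) 1) r := by
  have hr0 : 0 < r := (div_pos two_pos hδ).trans hr
  have hsub : Ioo (1 / r) (2 / r) ⊆ Ioi 0 := fun s hs => (div_pos one_pos hr0).trans hs.1
  have hlower : ∀ s ∈ Ioo (1 / r) (2 / r), ENNReal.ofReal (a * (2 / r) ^ (-(α + 1))) ≤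
      ENNReal.ofReal (g s) * ENNReal.ofReal (min ((s * r) ^ 2) 1) := by
    rintro s ⟨hs1, hs2⟩
    have hs : 0 < s := hsub ⟨hs1, hs2⟩
    have hsr : 1 < s * r := by rwa [div_lt_iff₀ hr0] at hs1
    have hsδ : s < δ := hs2.trans (by rwa [div_lt_iff₀ hr0, mul_comm, ← div_lt_iff₀ hδ])
    rw [min_eq_right (by nlinarith), ENNReal.ofReal_one, mul_one]
    refine ofReal_le_ofReal ?_
    calc a * (2 / r) ^ (-(α + 1)) ≤ a * s ^ (-(α + 1)) :=
          mul_le_mul_of_nonneg_left (Real.rpow_le_rpow_of_nonpos hs hs2.le (by linarith)) ha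
      _ ≤ s ^ (α + 1) * g s * s ^ (-(α + 1)) :=
          mul_le_mul_of_nonneg_right (hlow s ⟨hs, hsδ⟩) (Real.rpow_nonneg hs.le _)
      _ = g s := by
          rw [Real.rpow_neg hs.le, mul_comm, ← mul_assoc, inv_mul_cancel₀ (by positivity), one_mul]
  have hvalue : a * (2 / r) ^ (-(α + 1)) * (2 / r - 1 / r) = a * 2 ^ (-(α + 1)) * r ^ α := by
    rw [Real.div_rpow zero_le_two hr0.le, Real.rpow_neg hr0.le, Real.rpow_add hr0, Real.rpow_one]
    field_simp
    ring
  calc ENNReal.ofReal (a * 2 ^ (-(α + 1)) * r ^ α)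
      = ∫⁻ _ in Ioo (1 / r) (2 / r), ENNReal.ofReal (a * (2 / r) ^ (-(α + 1))) := by
        rw [setLIntegral_const, Real.volume_Ioo, ← ofReal_mul (by positivity), hvalue]
    _ ≤ ∫⁻ s in Ioo (1 / r) (2 / r), ENNReal.ofReal (g s) * ENNReal.ofReal (min ((s * r) ^ 2) 1) :=
        setLIntegral_mono' measurableSet_Ioo hlower
    _ ≤ dilatedIntegral g (fun t => min (t ^ 2) 1) r := lintegral_mono_set hsub

lemma ofReal_mul_indicator_rpow_le {α β δ b : ℝ} (hδ : 0 < δ) (hβ2 : β ≤ 2)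
    (hup : ∀ s ∈ Ioo 0 δ, s ^ (α + 1) * g s ≤ b) {r s : ℝ} (hr : 0 < r) (hs : 0 < s) :
    ENNReal.ofReal (g s) * ENNReal.ofReal ((Ioi 1).indicator (· ^ β) (s * r)) ≤
      ENNReal.ofReal (r ^ β) *
        ((Ioi r⁻¹).indicator (fun s => ENNReal.ofReal (b * s ^ (-(α - β) - 1))) s +
          ENNReal.ofReal (δ ^ (β - 2)) *
            (ENNReal.ofReal (g s) * ENNReal.ofReal ((s * 1) ^ 2))) := by
  by_cases hsr : s * r ∈ Ioi 1
  swap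
  · simp [indicator_of_notMem hsr]
  have hs' : s ∈ Ioi r⁻¹ := by rw [mem_Ioi, inv_lt_iff_one_lt_mul₀ hr]; exact hsr
  rw [indicator_of_mem hsr, indicator_of_mem hs', Real.mul_rpow hs.le hr.le,
    ofReal_mul (by positivity), mul_one, mul_comm (ENNReal.ofReal (s ^ β)), mul_left_comm]
  gcongr ENNReal.ofReal (r ^ β) * ?_
  rcases lt_or_ge s δ with hsδ | hδs
  · calc ENNReal.ofReal (g s) * ENNReal.ofReal (s ^ β)
        = ENNReal.ofReal (g s * s ^ β) := (ENNReal.ofReal_mul' (by positivity)).symm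
      _ ≤ ENNReal.ofReal (b * s ^ (-(α - β) - 1)) :=
          ofReal_le_ofReal (mul_rpow_le_of_rpow_mul_le hs (hup s ⟨hs, hsδ⟩))
      _ ≤ _ := le_self_add
  · calc ENNReal.ofReal (g s) * ENNReal.ofReal (s ^ β)
        ≤ ENNReal.ofReal (g s) * (ENNReal.ofReal (δ ^ (β - 2)) * ENNReal.ofReal (s ^ 2)) := by
          rw [← ofReal_mul (p := δ ^ (β - 2)) (by positivity)]
          gcongr
          exact rpow_le_rpow_sub_two_mul_sq hδ hδs hβ2
      _ = ENNReal.ofReal (δ ^ (β - 2)) * (ENNReal.ofReal (g s) * ENNReal.ofReal (s ^ 2)) := by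
          ring
      _ ≤ _ := le_add_self

lemma dilatedIntegral_indicator_rpow_le {α β δ b : ℝ} (hδ : 0 < δ)
    (hβα : β < α) (hβ2 : β ≤ 2) (hup : ∀ s ∈ Ioo 0 δ, s ^ (α + 1) * g s ≤ b) {r : ℝ}
    (hr : 1 ≤ r) :
    dilatedIntegral g ((Ioi 1).indicator (· ^ β)) r ≤ ENNReal.ofReal (r ^ α) *
      (ENNReal.ofReal (b / (α - β)) +
        ENNReal.ofReal (δ ^ (β - 2)) * dilatedIntegral g (· ^ 2) 1) := by
  have hr0 : 0 < r := one_pos.trans_le hr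
  set A : ℝ → ℝ≥0∞ := (Ioi r⁻¹).indicator fun s => ENNReal.ofReal (b * s ^ (-(α - β) - 1))
  have hA : ∫⁻ s in Ioi 0, A s ≤ ENNReal.ofReal (b / (α - β) * r ^ (α - β)) := by
    rw [← lintegral_Ioi_inv_mul_rpow b (sub_pos.2 hβα) hr0]
    exact (setLIntegral_le_lintegral _ _).trans_eq (lintegral_indicator measurableSet_Ioi _)
  have hrβ : r ^ β * (b / (α - β) * r ^ (α - β)) = r ^ α * (b / (α - β)) := by
    rw [mul_left_comm, ← Real.rpow_add hr0, add_sub_cancel, mul_comm]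
  calc dilatedIntegral g ((Ioi 1).indicator (· ^ β)) r
      ≤ ∫⁻ s in Ioi 0, ENNReal.ofReal (r ^ β) * (A s + ENNReal.ofReal (δ ^ (β - 2)) *
          (ENNReal.ofReal (g s) * ENNReal.ofReal ((s * 1) ^ 2))) :=
        setLIntegral_mono' measurableSet_Ioi fun s hs =>
          ofReal_mul_indicator_rpow_le hδ hβ2 hup hr0 hs
    _ = ENNReal.ofReal (r ^ β) * ((∫⁻ s in Ioi 0, A s) +
          ENNReal.ofReal (δ ^ (β - 2)) * dilatedIntegral g (· ^ 2) 1) := by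
        rw [lintegral_const_mul' _ _ ofReal_ne_top, lintegral_add_left
          ((Measurable.ennreal_ofReal (by fun_prop)).indicator measurableSet_Ioi),
          lintegral_const_mul' _ _ ofReal_ne_top]
        rfl
    _ ≤ _ := by
        grw [hA, mul_add, mul_add, ← ofReal_mul (by positivity), hrβ, ofReal_mul (by positivity)]
        gcongr

lemma dilatedIntegral_indicator_rpow_le_mul_min {β : ℝ} (hβ2 : β ≤ 2) {r R : ℝ} (hr : 0 ≤ r)
    (hrR : r ≤ R) (hR : 1 ≤ R) :
    dilatedIntegral g ((Ioi 1).indicator (· ^ β)) r ≤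
      ENNReal.ofReal (R ^ 2) * dilatedIntegral g (· ^ 2) 1 * ENNReal.ofReal (min (r ^ 2) 1) := by
  calc dilatedIntegral g ((Ioi 1).indicator (· ^ β)) r ≤ dilatedIntegral g (· ^ 2) r :=
        dilatedIntegral_mono (fun t _ => indicator_rpow_le_sq hβ2 t) hr
    _ ≤ ENNReal.ofReal (R ^ 2 * min (r ^ 2) 1) * dilatedIntegral g (· ^ 2) 1 := by
        rw [dilatedIntegral_sq]
        gcongr
        exact sq_le_sq_mul_min_sq_one hr hrR hR
    _ = _ := by rw [ofReal_mul (by positivity)]; ring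

lemma mul_dilatedIntegral_indicator_rpow_le {α β δ a b : ℝ} (hδ : 0 < δ) (hα : 0 ≤ α + 1)
    (ha : 0 ≤ a) (hβα : β < α) (hβ2 : β ≤ 2) (hlow : ∀ s ∈ Ioo 0 δ, a ≤ s ^ (α + 1) * g s)
    (hup : ∀ s ∈ Ioo 0 δ, s ^ (α + 1) * g s ≤ b) {r : ℝ} (hr : max (2 / δ) 1 < r) :
    ENNReal.ofReal (a * 2 ^ (-(α + 1))) * dilatedIntegral g ((Ioi 1).indicator (· ^ β)) r ≤
      (ENNReal.ofReal (b / (α - β)) + ENNReal.ofReal (δ ^ (β - 2)) * dilatedIntegral g (· ^ 2) 1) *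
        dilatedIntegral g (fun t => min (t ^ 2) 1) r := by
  grw [dilatedIntegral_indicator_rpow_le hδ hβα hβ2 hup ((le_max_right _ _).trans hr.le),
    ← mul_assoc, ← ofReal_mul (by positivity),
    rpow_mul_le_dilatedIntegral_min_sq_one hδ hα ha hlow ((le_max_left _ _).trans_lt hr),
    mul_comm]

lemma exists_dilatedIntegral_min_rpow_le (hg : Measurable g) {α β δ a b : ℝ} (hδ : 0 < δ)
    (hα : 0 ≤ α + 1) (ha : 0 < a) (hβα : β < α) (hβ2 : β ≤ 2)
    (hlow : ∀ s ∈ Ioo 0 δ, a ≤ s ^ (α + 1) * g s) (hup : ∀ s ∈ Ioo 0 δ, s ^ (α + 1) * g s ≤ b)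
    (hmoment : dilatedIntegral g (· ^ 2) 1 ≠ ⊤) :
    ∃ C C' : ℝ≥0∞, C ≠ ⊤ ∧ C' ≠ ⊤ ∧ ∀ r, 0 ≤ r →
      dilatedIntegral g (fun t => min (t ^ 2) (t ^ β)) r ≤
        C * dilatedIntegral g (fun t => min (t ^ 2) 1) r +
          C' * ENNReal.ofReal (min (r ^ 2) 1) := by
  set D := ENNReal.ofReal (b / (α - β)) +
    ENNReal.ofReal (δ ^ (β - 2)) * dilatedIntegral g (· ^ 2) 1
  set c := ENNReal.ofReal (a * 2 ^ (-(α + 1)))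
  have hc : c ≠ 0 := (ENNReal.ofReal_pos.2 (by positivity)).ne'
  refine ⟨1 + D / c, ENNReal.ofReal (max (2 / δ) 1 ^ 2) * dilatedIntegral g (· ^ 2) 1,
    by finiteness, by finiteness, fun r hr => ?_⟩
  refine (dilatedIntegral_le_add hg (by fun_prop) (fun t ht => min_sq_rpow_le β ht) hr).trans ?_
  rcases le_or_gt r (max (2 / δ) 1) with hrR | hRr
  · grw [dilatedIntegral_indicator_rpow_le_mul_min hβ2 hr hrR (le_max_right _ _)]
    gcongr
    exact le_mul_of_one_le_left' le_self_add
  · have htail : dilatedIntegral g ((Ioi 1).indicator (· ^ β)) r ≤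
        D / c * dilatedIntegral g (fun t => min (t ^ 2) 1) r := by
      rw [← ENNReal.mul_div_right_comm, ENNReal.le_div_iff_mul_le (.inl hc) (.inl ofReal_ne_top),
        mul_comm]
      exact mul_dilatedIntegral_indicator_rpow_le hδ hα ha.le hβα hβ2 hlow hup hRr
    grw [htail, add_mul, one_mul]
    exact le_self_add

end Dilated

theorem stmt19_general (d : ℕ) (g : ℝ → ℝ) (hgmeas : Measurable g)
    (δ α a b : ℝ) (hδ : δ ∈ Ioo (0 : ℝ) 1) (hα : α ∈ Ioo (0 : ℝ) 2) (ha : 0 < a)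
    (hbound : ∀ s ∈ Ioo (0 : ℝ) δ, a < s ^ (α + 1) * g s ∧ s ^ (α + 1) * g s < b)
    (hint : ∫⁻ s in Ioi (0 : ℝ), ENNReal.ofReal (s ^ 2 * g s) < ⊤)
    (β : ℝ) (hβα : β < α) :
    ∀ M ∈ UpsilonDomain (E := EuclideanSpace ℝ (Fin d)) (densMeasure g),
      MemMAlpha β (Upsilon (densMeasure g) M) := by
  rintro M ⟨⟨hMσ, -, hM⟩, -, hU0, hU⟩
  refine ⟨hU0, ?_⟩
  have hmoment : dilatedIntegral g (· ^ 2) 1 ≠ ⊤ := by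
    refine ne_top_of_le_ne_top hint.ne (setLIntegral_mono' measurableSet_Ioi fun s _ => ?_)
    rw [mul_one, ← ENNReal.ofReal_mul' (sq_nonneg s), mul_comm]
  obtain ⟨C, C', hC, hC', hle⟩ := exists_dilatedIntegral_min_rpow_le hgmeas hδ.1
    (by linarith [hα.1]) ha hβα (by linarith [hα.2]) (fun s hs => (hbound s hs).1.le)
    (fun s hs => (hbound s hs).2.le) hmoment
  rw [lintegral_upsilon_densMeasure (φ := fun t => min (t ^ 2) 1) hgmeas (by fun_prop)] at hU
  rw [lintegral_upsilon_densMeasure (φ := fun t => min (t ^ 2) (t ^ β)) hgmeas (by fun_prop)]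
  calc ∫⁻ x, dilatedIntegral g (fun t => min (t ^ 2) (t ^ β)) ‖x‖ ∂M
      ≤ ∫⁻ x, C * dilatedIntegral g (fun t => min (t ^ 2) 1) ‖x‖ +
          C' * ENNReal.ofReal (min (‖x‖ ^ 2) 1) ∂M := lintegral_mono fun x => hle _ (norm_nonneg x)
    _ = C * ∫⁻ x, dilatedIntegral g (fun t => min (t ^ 2) 1) ‖x‖ ∂M +
          C' * ∫⁻ x, ENNReal.ofReal (min (‖x‖ ^ 2) 1) ∂M := by
        rw [lintegral_add_right _ (by fun_prop), lintegral_const_mul' _ _ hC,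
          lintegral_const_mul' _ _ hC']
    _ < ⊤ := by finiteness

theorem stmt19 (d : ℕ) (hd : 1 ≤ d) (g : ℝ → ℝ) (hgmeas : Measurable g) (hg0 : ∀ s, 0 ≤ g s)
    (δ α a b : ℝ) (hδ : δ ∈ Ioo (0 : ℝ) 1) (hα : α ∈ Ioo (0 : ℝ) 2) (ha : 0 < a) (hab : a < b)
    (hbound : ∀ s ∈ Ioo (0 : ℝ) δ, a < s ^ (α + 1) * g s ∧ s ^ (α + 1) * g s < b)
    (hint : ∫⁻ s in Ioi (0 : ℝ), ENNReal.ofReal (s ^ 2 * g s) < ⊤)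
    (β : ℝ) (hβ0 : 0 ≤ β) (hβα : β < α) :
    ∀ M ∈ UpsilonDomain (E := EuclideanSpace ℝ (Fin d)) (densMeasure g),
      MemMAlpha β (Upsilon (densMeasure g) M) :=
  stmt19_general d g hgmeas δ α a b hδ hα ha hbound hint β hβα
end
end
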